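/- Let φ_μ be ρ-weakly convex and differentiable on its domain intersected with dom r (φ_μ = f_μ + r, f_μ smooth, r convex). If x* ∈ dom φ_μ satisfies ‖∇e_λ φ_μ(x*)‖ ≤ ε with λ < ρ^{-1}, then x* is a (λε, ε)-Goldstein stationary point of φ_μ, i.e., min{‖g‖ : g ∈ ∂̄_{λε} φ_μ(x*)} ≤ ε. -/

import Mathlib

open Filter Metric
open scoped Topology NNReal

variable {n : ℕ}

/-- Clarke generalized directional derivative of `f` at `x` in direction `v`. -/
noncomputable def clarkeDeriv (f : EuclideanSpace ℝ (Fin n) → ℝ)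
    (x v : EuclideanSpace ℝ (Fin n)) : ℝ :=
  limsup (fun p : EuclideanSpace ℝ (Fin n) × ℝ => (f (p.1 + p.2 • v) - f p.1) / p.2)
    ((𝓝 x) ×ˢ (𝓝[>] (0 : ℝ)))

/-- Clarke subdifferential of `f` at `x`. -/
def clarkeSubdiff (f : EuclideanSpace ℝ (Fin n) → ℝ) (x : EuclideanSpace ℝ (Fin n)) :
    Set (EuclideanSpace ℝ (Fin n)) :=
  {g | ∀ v, (inner ℝ g v : ℝ) ≤ clarkeDeriv f x v}

/-- The `δ`-Goldstein subdifferential `∂̄_δ f(x) = conv(⋃_{y ∈ B̄_δ(x)} ∂̄f(y))`. -/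
def goldsteinSubdiff (δ : ℝ) (f : EuclideanSpace ℝ (Fin n) → ℝ)
    (x : EuclideanSpace ℝ (Fin n)) : Set (EuclideanSpace ℝ (Fin n)) :=
  convexHull ℝ (⋃ y ∈ closedBall x δ, clarkeSubdiff f y)

/-- Moreau envelope of `φ` with parameter `λ`. -/
noncomputable def moreauEnv (φ : EuclideanSpace ℝ (Fin n) → ℝ) (lam : ℝ)
    (x : EuclideanSpace ℝ (Fin n)) : ℝ :=
  ⨅ w, (φ w + (1 / (2 * lam)) * ‖w - x‖ ^ 2)

/-! Let `p` be the proximal point of `x*`, the minimiser of `φ w + ‖w - x*‖² / (2λ)`; it exists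
because `φ + ‖· - x*‖² / (2λ)` grows quadratically once `λρ < 1`. Testing the envelope at `x* + d`
with `p` gives a quadratic upper bound with slope `(x* - p) / λ`, and testing it at `x*` with the
midpoint of the proximal points of `x* ± d` gives a midpoint weak-convexity inequality; together
they make `e_λ φ` differentiable at `x*` with gradient `(x* - p) / λ`. So `‖x* - p‖ ≤ λε`, and the
minimality of `p` exhibits this gradient as a proximal, hence Clarke, subgradient of `φ` at `p`. -/

open Set
open scoped RealInnerProductSpace

section InnerProductSpace

variable {E : Type*} [NormedAddCommGroup E] [InnerProductSpace ℝ E]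

section Smooth

variable [CompleteSpace E] {ρ : ℝ≥0} {f : E → ℝ}

theorem hasDerivAt_comp_add_smul (hf : Differentiable ℝ f) (a d : E) (t : ℝ) :
    HasDerivAt (fun s : ℝ => f (a + s • d)) ⟪gradient f (a + t • d), d⟫ t := by
  have hline : HasDerivAt (fun s : ℝ => a + s • d) d t := by
    simpa using ((hasDerivAt_id t).smul_const d).const_add a
  rw [inner_gradient_left]
  exact (hf _).hasFDerivAt.comp_hasDerivAt t hline

theorem abs_sub_sub_inner_gradient_le (hf : Differentiable ℝ f)
    (hg : LipschitzWith ρ (gradient f)) (a b : E) :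
    |f b - f a - ⟪gradient f a, b - a⟫| ≤ ρ / 2 * ‖b - a‖ ^ 2 := by
  set d := b - a
  have hderiv (t : ℝ) : HasDerivAt (fun s => f (a + s • d) - f a - s * ⟪gradient f a, d⟫)
      (⟪gradient f (a + t • d) - gradient f a, d⟫) t := by
    rw [inner_sub_left]
    exact (((hasDerivAt_comp_add_smul hf a d t).sub_const (f a)).sub
      ((hasDerivAt_id t).mul_const ⟪gradient f a, d⟫)).congr_deriv (by simp)
  have hbound : ∀ t ∈ Ico (0 : ℝ) 1,
      ‖⟪gradient f (a + t • d) - gradient f a, d⟫‖ ≤ ρ * ‖d‖ ^ 2 * t := by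
    rintro t ⟨ht, -⟩
    calc ‖⟪gradient f (a + t • d) - gradient f a, d⟫‖
        ≤ ‖gradient f (a + t • d) - gradient f a‖ * ‖d‖ := norm_inner_le_norm _ _
      _ ≤ ρ * ‖(a + t • d) - a‖ * ‖d‖ := by
          gcongr; simpa [dist_eq_norm] using hg.dist_le_mul (a + t • d) a
      _ = ρ * ‖d‖ ^ 2 * t := by
          rw [add_sub_cancel_left, norm_smul, Real.norm_of_nonneg ht]; ring
  have := image_norm_le_of_norm_deriv_right_le_deriv_boundary
    (fun t _ => (hderiv t).continuousAt.continuousWithinAt)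
    (fun t _ => (hderiv t).hasDerivWithinAt) (B := fun t => ρ / 2 * ‖d‖ ^ 2 * t ^ 2) (by simp)
    (fun t => ((hasDerivAt_pow 2 t).const_mul (ρ / 2 * ‖d‖ ^ 2)).congr_deriv (by ring)) hbound
    (right_mem_Icc.2 zero_le_one)
  simpa [d] using this

theorem two_mul_le_add_add_mul_norm_sq (hf : Differentiable ℝ f)
    (hg : LipschitzWith ρ (gradient f)) (m h : E) :
    2 * f m ≤ f (m + h) + f (m - h) + ρ * ‖h‖ ^ 2 := by
  have h₁ := abs_le.1 (abs_sub_sub_inner_gradient_le hf hg m (m + h))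
  have h₂ := abs_le.1 (abs_sub_sub_inner_gradient_le hf hg m (m - h))
  simp only [add_sub_cancel_left, sub_sub_cancel_left, inner_neg_right, norm_neg] at h₁ h₂
  linarith [h₁.1, h₂.1]

theorem locallyLipschitz_of_continuous_gradient (hf : Differentiable ℝ f)
    (hg : Continuous (gradient f)) : LocallyLipschitz f := by
  refine ContDiff.locallyLipschitz (contDiff_one_iff_fderiv.2 ⟨hf, ?_⟩)
  rw [← toDual_comp_gradient]
  exact (InnerProductSpace.toDual ℝ E).continuous.comp hg

end Smooth

theorem ConvexOn.two_mul_le_add_add {r : E → ℝ} (hr : ConvexOn ℝ univ r) (m h : E) :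
    2 * r m ≤ r (m + h) + r (m - h) := by
  have := hr.2 (mem_univ (m + h)) (mem_univ (m - h)) (by norm_num : (0 : ℝ) ≤ 1 / 2)
    (by norm_num : (0 : ℝ) ≤ 1 / 2) (by norm_num)
  rw [show (1 / 2 : ℝ) • (m + h) + (1 / 2 : ℝ) • (m - h) = m by module, smul_eq_mul,
    smul_eq_mul] at this
  linarith

theorem ConvexOn.exists_sub_mul_norm_sub_le [FiniteDimensional ℝ E] {r : E → ℝ}
    (hr : ConvexOn ℝ univ r) (x : E) : ∃ L : ℝ, ∀ w, r x - L * ‖w - x‖ ≤ r w := by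
  obtain ⟨K, U, hU, hK⟩ := hr.locallyLipschitz x
  obtain ⟨δ, hδ, hball⟩ := Metric.mem_nhds_iff.1 hU
  refine ⟨K, fun w => ?_⟩
  set s := ‖w - x‖
  have hs : 0 ≤ s := norm_nonneg _
  set θ := δ / (δ + s)
  have hθ0 : 0 < θ := by positivity
  have hθ1 : θ ≤ 1 := div_le_one_of_le₀ (by linarith) (by positivity)
  have hθs : θ * s < δ := by
    rw [div_mul_eq_mul_div, div_lt_iff₀ (by positivity)]; nlinarith
  have hz : x + θ • (w - x) ∈ U := hball <| by
    rwa [mem_ball, dist_eq_norm, add_sub_cancel_left, norm_smul, Real.norm_of_nonneg hθ0.le]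
  have hlip : r x - K * (θ * s) ≤ r (x + θ • (w - x)) := by
    have := hK.dist_le_mul _ hz x (mem_of_mem_nhds hU)
    rw [Real.dist_eq, dist_eq_norm, add_sub_cancel_left, norm_smul,
      Real.norm_of_nonneg hθ0.le] at this
    linarith [neg_abs_le (r (x + θ • (w - x)) - r x)]
  have hconv : r (x + θ • (w - x)) ≤ (1 - θ) * r x + θ * r w := by
    have := hr.2 (mem_univ x) (mem_univ w) (sub_nonneg.2 hθ1) hθ0.le (by ring)
    rwa [show (1 - θ) • x + θ • w = x + θ • (w - x) by module, smul_eq_mul, smul_eq_mul] at this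
  have : θ * (r x - K * s) ≤ θ * r w := by nlinarith
  exact le_of_mul_le_mul_left this hθ0

def IsProxPoint (φ : E → ℝ) (lam : ℝ) (x p : E) : Prop :=
  ∀ w, φ p + 1 / (2 * lam) * ‖p - x‖ ^ 2 ≤ φ w + 1 / (2 * lam) * ‖w - x‖ ^ 2

theorem IsProxPoint.add_inner_sub_le {φ : E → ℝ} {lam : ℝ} {x p : E}
    (hp : IsProxPoint φ lam x p) (w : E) :
    φ p + ⟪lam⁻¹ • (x - p), w - p⟫ - 1 / (2 * lam) * ‖w - p‖ ^ 2 ≤ φ w := by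
  have hw := hp w
  rw [show w - x = (w - p) - (x - p) by abel, norm_sub_sq_real (w - p) (x - p),
    norm_sub_rev x p] at hw
  rw [real_inner_smul_left, real_inner_comm]
  linear_combination hw

theorem exists_isProxPoint [FiniteDimensional ℝ E] {ρ : ℝ≥0} {f r : E → ℝ}
    (hf : Differentiable ℝ f) (hg : LipschitzWith ρ (gradient f)) (hr : ConvexOn ℝ univ r)
    {lam : ℝ} (hlam : 0 < lam) (hlamρ : lam * ρ < 1) (x : E) :
    ∃ p, IsProxPoint (fun y => f y + r y) lam x p := by
  set ψ : E → ℝ := fun w => f w + r w + 1 / (2 * lam) * ‖w - x‖ ^ 2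
  obtain ⟨L, hL⟩ := hr.exists_sub_mul_norm_sub_le x
  set C := ‖gradient f x‖ + L
  set a := 1 / (2 * lam) - ρ / 2
  have ha : 0 < a := by
    rw [sub_pos, lt_div_iff₀ (by positivity)]; linarith
  have hgrowth (w : E) : ψ x - C * ‖w - x‖ + a * ‖w - x‖ ^ 2 ≤ ψ w := by
    have hfw := (abs_le.1 (abs_sub_sub_inner_gradient_le hf hg x w)).1
    have hcs := neg_le_of_abs_le (abs_real_inner_le_norm (gradient f x) (w - x))
    simp only [ψ, C, a, sub_self, norm_zero]
    nlinarith [hL w]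
  have hsub : {w | ψ w ≤ ψ x} ⊆ closedBall x (|C| / a) := by
    intro w hw
    have := hgrowth w
    rw [mem_ofPred_eq] at hw
    have hquad : a * ‖w - x‖ * ‖w - x‖ ≤ |C| * ‖w - x‖ := by
      nlinarith [le_abs_self C, norm_nonneg (w - x)]
    rw [mem_closedBall, dist_eq_norm]
    rcases (norm_nonneg (w - x)).eq_or_lt with h0 | h0
    · rw [← h0]; positivity
    · exact (le_div_iff₀' ha).2 (le_of_mul_le_mul_right hquad h0)
  have hψ : Continuous ψ := by
    have := hf.continuous
    have := hr.locallyLipschitz.continuous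
    fun_prop
  exact hψ.exists_forall_le_of_isBounded x (isBounded_closedBall.subset hsub)

theorem mul_norm_sq_sub_inv_mul_norm_sub_sq_le {ρ lam : ℝ} (hlam : 0 < lam)
    (hlamρ : lam * ρ < 1) (h d : E) :
    ρ * ‖h‖ ^ 2 - lam⁻¹ * ‖h - d‖ ^ 2 ≤ ρ / (1 - lam * ρ) * ‖d‖ ^ 2 := by
  have hc : 0 < 1 - lam * ρ := by linarith
  have hcs := sub_nonneg.2 (real_inner_le_norm h d)
  have hsq : 0 ≤ ((1 - lam * ρ) * ‖h‖ - ‖d‖) ^ 2 / (lam * (1 - lam * ρ)) := by positivity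
  rw [norm_sub_sq_real]
  have key : ρ / (1 - lam * ρ) * ‖d‖ ^ 2 - (ρ * ‖h‖ ^ 2 - lam⁻¹ * (‖h‖ ^ 2 - 2 * ⟪h, d⟫ + ‖d‖ ^ 2))
      = ((1 - lam * ρ) * ‖h‖ - ‖d‖) ^ 2 / (lam * (1 - lam * ρ))
        + 2 * lam⁻¹ * (‖h‖ * ‖d‖ - ⟪h, d⟫) := by
    have : 1 - ρ * lam ≠ 0 := by rw [mul_comm]; exact hc.ne'
    field_simp
    ring
  nlinarith [inv_pos.2 hlam]

theorem hasGradientAt_of_le_of_two_mul_le [CompleteSpace E] {e : E → ℝ} {x g : E} {C C' : ℝ}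
    (hup : ∀ d, e (x + d) ≤ e x + ⟪g, d⟫ + C * ‖d‖ ^ 2)
    (hmid : ∀ d, 2 * e x ≤ e (x + d) + e (x - d) + C' * ‖d‖ ^ 2) :
    HasGradientAt e g x := by
  rw [hasGradientAt_iff_isLittleO_nhds_zero]
  refine Asymptotics.IsBigO.trans_isLittleO (g := fun d => ‖d‖ ^ 2) ?_
    (Asymptotics.isLittleO_norm_pow_id one_lt_two)
  refine Asymptotics.IsBigO.of_bound (|C| + |C'|) (Eventually.of_forall fun d => ?_)
  have h₁ := hup d
  -- the bound from below is the bound from above at `-d`, fed into `hmid`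
  have h₂ := hup (-d)
  have h₃ := hmid d
  rw [← sub_eq_add_neg, inner_neg_right, norm_neg] at h₂
  rw [Real.norm_eq_abs, Real.norm_of_nonneg (by positivity), abs_le]
  have := sq_nonneg ‖d‖
  constructor <;> nlinarith [le_abs_self C, le_abs_self C', neg_abs_le C, neg_abs_le C']

theorem LocallyLipschitz.isBoundedUnder_le_slope {φ : E → ℝ} (hφ : LocallyLipschitz φ)
    (p v : E) : IsBoundedUnder (· ≤ ·) (𝓝 p ×ˢ 𝓝[>] 0)
      (fun z : E × ℝ => (φ (z.1 + z.2 • v) - φ z.1) / z.2) := by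
  obtain ⟨K, U, hU, hK⟩ := hφ p
  have hfst : Tendsto (fun z : E × ℝ => z.1) (𝓝 p ×ˢ 𝓝[>] 0) (𝓝 p) := tendsto_fst
  have hsnd : Tendsto (fun z : E × ℝ => z.2) (𝓝 p ×ˢ 𝓝[>] 0) (𝓝 0) :=
    tendsto_snd.mono_right nhdsWithin_le_nhds
  have hshift : Tendsto (fun z : E × ℝ => z.1 + z.2 • v) (𝓝 p ×ˢ 𝓝[>] 0) (𝓝 p) := by
    simpa using hfst.add (hsnd.smul_const v)
  refine isBoundedUnder_of_eventually_le (a := K * ‖v‖) ?_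
  have hpos : ∀ᶠ z : E × ℝ in 𝓝 p ×ˢ 𝓝[>] 0, 0 < z.2 := tendsto_snd self_mem_nhdsWithin
  filter_upwards [tendsto_fst hU, hshift hU, hpos] with z hz₁ hz₂ hz₃
  have := hK.dist_le_mul _ hz₂ _ hz₁
  rw [Real.dist_eq, dist_eq_norm, add_sub_cancel_left, norm_smul,
    Real.norm_of_nonneg hz₃.le] at this
  rw [div_le_iff₀ hz₃]
  linarith [le_abs_self (φ (z.1 + z.2 • v) - φ z.1)]

end InnerProductSpace

local notation "ℝⁿ" => EuclideanSpace ℝ (Fin n)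

section MoreauEnvelope

variable {φ : EuclideanSpace ℝ (Fin n) → ℝ} {lam : ℝ}

theorem IsProxPoint.moreauEnv_eq {x p : ℝⁿ} (hp : IsProxPoint φ lam x p) :
    moreauEnv φ lam x = φ p + 1 / (2 * lam) * ‖p - x‖ ^ 2 :=
  le_antisymm (ciInf_le ⟨_, forall_mem_range.2 hp⟩ p) (le_ciInf hp)

theorem IsProxPoint.moreauEnv_le {x p : ℝⁿ} (hp : IsProxPoint φ lam x p) (w : ℝⁿ) :
    moreauEnv φ lam x ≤ φ w + 1 / (2 * lam) * ‖w - x‖ ^ 2 :=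
  hp.moreauEnv_eq.trans_le (hp w)

theorem IsProxPoint.moreauEnv_add_le {x p d q : ℝⁿ} (hp : IsProxPoint φ lam x p)
    (hq : IsProxPoint φ lam (x + d) q) :
    moreauEnv φ lam (x + d)
      ≤ moreauEnv φ lam x + ⟪lam⁻¹ • (x - p), d⟫ + 1 / (2 * lam) * ‖d‖ ^ 2 := by
  have hle := hq.moreauEnv_le p
  rw [← sub_sub, norm_sub_sq_real (p - x) d] at hle
  rw [hp.moreauEnv_eq, real_inner_smul_left, ← neg_sub p x, inner_neg_left]
  linear_combination hle

theorem moreauEnv_two_mul_le {ρ : ℝ}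
    (hφ : ∀ m h, 2 * φ m ≤ φ (m + h) + φ (m - h) + ρ * ‖h‖ ^ 2)
    (hlam : 0 < lam) (hlamρ : lam * ρ < 1) (hprox : ∀ y, ∃ q, IsProxPoint φ lam y q) (x d : ℝⁿ) :
    2 * moreauEnv φ lam x
      ≤ moreauEnv φ lam (x + d) + moreauEnv φ lam (x - d) + ρ / (1 - lam * ρ) * ‖d‖ ^ 2 := by
  obtain ⟨q₁, hq₁⟩ := hprox (x + d)
  obtain ⟨q₂, hq₂⟩ := hprox (x - d)
  obtain ⟨p, hp⟩ := hprox x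
  -- the midpoint `m` of the proximal points of `x ± d` is a competitor in the infimum at `x`
  set m : ℝⁿ := (1 / 2 : ℝ) • (q₁ + q₂)
  set h : ℝⁿ := (1 / 2 : ℝ) • (q₁ - q₂)
  have hmid := hφ m h
  rw [show m + h = q₁ by module, show m - h = q₂ by module] at hmid
  have hpar := parallelogram_law_with_norm ℝ (m - x) (h - d)
  rw [show m - x + (h - d) = q₁ - (x + d) by module,
    show m - x - (h - d) = q₂ - (x - d) by module] at hpar
  rw [hq₁.moreauEnv_eq, hq₂.moreauEnv_eq]
  linear_combination 2 * hp.moreauEnv_le m + hmid - 1 / (2 * lam) * hpar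
    + mul_norm_sq_sub_inv_mul_norm_sub_sq_le hlam hlamρ h d

theorem IsProxPoint.hasGradientAt_moreauEnv {ρ : ℝ} {x p : ℝⁿ}
    (hφ : ∀ m h, 2 * φ m ≤ φ (m + h) + φ (m - h) + ρ * ‖h‖ ^ 2)
    (hlam : 0 < lam) (hlamρ : lam * ρ < 1) (hprox : ∀ y, ∃ q, IsProxPoint φ lam y q)
    (hp : IsProxPoint φ lam x p) :
    HasGradientAt (moreauEnv φ lam) (lam⁻¹ • (x - p)) x :=
  hasGradientAt_of_le_of_two_mul_le (fun d => hp.moreauEnv_add_le (hprox (x + d)).choose_spec)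
    (moreauEnv_two_mul_le hφ hlam hlamρ hprox x)

end MoreauEnvelope

theorem mem_clarkeSubdiff_of_forall_le {φ : ℝⁿ → ℝ} (hφ : LocallyLipschitz φ) {p g : ℝⁿ}
    {c : ℝ} (hle : ∀ w, φ p + ⟪g, w - p⟫ - c * ‖w - p‖ ^ 2 ≤ φ w) :
    g ∈ clarkeSubdiff φ p := by
  intro v
  have hslope (t : ℝ) (ht : 0 < t) : ⟪g, v⟫ - c * t * ‖v‖ ^ 2 ≤ (φ (p + t • v) - φ p) / t := by
    have := hle (p + t • v)
    rw [add_sub_cancel_left, real_inner_smul_right, norm_smul, Real.norm_of_nonneg ht.le] at this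
    rw [le_div_iff₀ ht]
    linarith
  have hlim : Tendsto (fun t : ℝ => ⟪g, v⟫ - c * t * ‖v‖ ^ 2) (𝓝[>] 0) (𝓝 ⟪g, v⟫) :=
    ((by fun_prop : Continuous fun t : ℝ => ⟪g, v⟫ - c * t * ‖v‖ ^ 2).tendsto' 0 _
      (by simp)).mono_left nhdsWithin_le_nhds
  -- the quotients are bounded above, so that this `limsup` is not a junk value
  refine le_of_forall_lt_imp_le_of_dense fun a ha =>
    le_limsup_of_frequently_le ?_ (hφ.isBoundedUnder_le_slope p v)
  have hev : ∀ᶠ z in pure p ×ˢ 𝓝[>] (0 : ℝ), a ≤ (φ (z.1 + z.2 • v) - φ z.1) / z.2 := by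
    rw [pure_prod, eventually_map]
    filter_upwards [hlim.eventually (eventually_gt_nhds ha), self_mem_nhdsWithin]
      with t hat ht using hat.le.trans (hslope t ht)
  exact hev.frequently.filter_mono (prod_mono (pure_le_nhds p) le_rfl)

theorem moreau_implies_goldstein_general (ρ : ℝ≥0)
    (fμ : EuclideanSpace ℝ (Fin n) → ℝ) (hfμ : Differentiable ℝ fμ)
    (hgrad : LipschitzWith ρ (gradient fμ))
    (r : EuclideanSpace ℝ (Fin n) → ℝ) (hr : ConvexOn ℝ Set.univ r)
    (lam : ℝ) (hlam : lam ∈ Set.Ioo 0 (ρ : ℝ)⁻¹) (ε : ℝ)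
    (xstar : EuclideanSpace ℝ (Fin n))
    (hsmall : ‖gradient (moreauEnv (fun y => fμ y + r y) lam) xstar‖ ≤ ε) :
    ∃ g ∈ goldsteinSubdiff (lam * ε) (fun y => fμ y + r y) xstar, ‖g‖ ≤ ε := by
  obtain ⟨hlam0, hlamρ⟩ := hlam
  have hρ : 0 < (ρ : ℝ) := inv_pos.1 (hlam0.trans hlamρ)
  rw [← one_div, lt_div_iff₀ hρ] at hlamρ
  have hprox := exists_isProxPoint hfμ hgrad hr hlam0 hlamρ
  obtain ⟨p, hp⟩ := hprox xstar
  have hweak (m h : ℝⁿ) : 2 * (fμ m + r m)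
      ≤ (fμ (m + h) + r (m + h)) + (fμ (m - h) + r (m - h)) + ρ * ‖h‖ ^ 2 := by
    linarith [two_mul_le_add_add_mul_norm_sq hfμ hgrad m h, hr.two_mul_le_add_add m h]
  rw [(hp.hasGradientAt_moreauEnv hweak hlam0 hlamρ hprox).gradient] at hsmall
  have hdist : p ∈ closedBall xstar (lam * ε) := by
    rw [mem_closedBall', dist_eq_norm]
    calc ‖xstar - p‖ = lam * ‖lam⁻¹ • (xstar - p)‖ := by
          rw [norm_smul, Real.norm_of_nonneg (inv_nonneg.2 hlam0.le),
            mul_inv_cancel_left₀ hlam0.ne']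
      _ ≤ lam * ε := by gcongr
  have hlip :=
    (locallyLipschitz_of_continuous_gradient hfμ hgrad.continuous).add hr.locallyLipschitz
  exact ⟨_, subset_convexHull ℝ _ (mem_biUnion hdist
    (mem_clarkeSubdiff_of_forall_le hlip hp.add_inner_sub_le)), hsmall⟩

/-- Surrogate Moreau-envelope stationarity implies Goldstein stationarity: if
`‖∇e_λφ_μ(x*)‖ ≤ ε` with `λ < ρ⁻¹`, then `x*` is a `(λε, ε)`-Goldstein stationary
point of `φ_μ = f_μ + r`. -/
theorem moreau_implies_goldstein (ρ : ℝ≥0) (hρ : 0 < ρ)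
    (fμ : EuclideanSpace ℝ (Fin n) → ℝ) (hfμ : Differentiable ℝ fμ)
    (hgrad : LipschitzWith ρ (gradient fμ))
    (r : EuclideanSpace ℝ (Fin n) → ℝ) (hr : ConvexOn ℝ Set.univ r)
    (hrlsc : LowerSemicontinuous r)
    (lam : ℝ) (hlam : lam ∈ Set.Ioo 0 (ρ : ℝ)⁻¹) (ε : ℝ) (hε : 0 < ε)
    (xstar : EuclideanSpace ℝ (Fin n))
    (hsmall : ‖gradient (moreauEnv (fun y => fμ y + r y) lam) xstar‖ ≤ ε) :
    ∃ g ∈ goldsteinSubdiff (lam * ε) (fun y => fμ y + r y) xstar, ‖g‖ ≤ ε :=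
  moreau_implies_goldstein_general ρ fμ hfμ hgrad r hr lam hlam ε xstar hsmall
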